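/- arXiv:2312.15623 — 3 statements merged into one kernel-verified Lean document; each statement's English description precedes it below -/
import Mathlib

section
/- Let X and N be independent real random variables, each admitting a probability density and having finite differential entropy, and suppose X + N also has finite differential entropy. Then the mutual information of the input and output of the additive-noise channel satisfies I(X ; X + N) = h(X + N) − h(N). -/
/-!
Write `P`, `Q`, `S` for the laws of `X`, `N`, `X + N`, and `g`, `s` for the Lebesgue densities
of `Q` and `S`. By independence the law of `(X, X + N)` is the image of `P ⊗ Q` under the shear
`(x, n) ↦ (x, x + n)`, so it has density `g (y - x)` with respect to `P ⊗ volume`, whereas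
`P ⊗ S` has density `s y`. Hence `d P_(X, X+N) / d(P ⊗ S) = g (y - x) / s y`, and integrating
its logarithm against the joint law gives `∫ log g dQ - ∫ log s dS = h(X + N) - h(N)`, because
`y - x` and `y` are distributed as `N` and `X + N` under the joint law.
-/

open MeasureTheory ProbabilityTheory Real
open scoped NNReal ENNReal Classical

noncomputable section

/-- Kullback–Leibler divergence `D(P ‖ Q) = ∫ log (dP/dQ) dP` when `P ≪ Q` and the
integral is well defined; `∞` otherwise. -/
def klDiv {α : Type*} [MeasurableSpace α] (P Q : Measure α) : EReal :=
  if P ≪ Q ∧ Integrable (fun x => Real.log (P.rnDeriv Q x).toReal) P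
  then ((∫ x, Real.log (P.rnDeriv Q x).toReal ∂P : ℝ) : EReal)
  else ⊤

/-- Mutual information `I(X ; Y) = D(P_(X,Y) ‖ P_X ⊗ P_Y)`. -/
def mutualInfo {Ω : Type*} [MeasurableSpace Ω] (μ : Measure Ω) (X Y : Ω → ℝ) : EReal :=
  klDiv (μ.map (fun ω => (X ω, Y ω))) ((μ.map X).prod (μ.map Y))

/-- Differential entropy `h(P) = -∫ f log f` where `f = dP/dx`. -/
def diffEntropy (P : Measure ℝ) : ℝ :=
  -∫ x, (P.rnDeriv volume x).toReal * Real.log (P.rnDeriv volume x).toReal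

/-- `P` has a density and a well-defined, finite differential entropy. -/
def HasFiniteDiffEntropy (P : Measure ℝ) : Prop :=
  P ≪ volume ∧
    Integrable (fun x => (P.rnDeriv volume x).toReal * Real.log (P.rnDeriv volume x).toReal)

/-- The mutual information `I(X ; X + N)` of the additive-noise channel with input law `P`
and noise law `Q`, input and noise being independent (canonical product-space model). -/
def rate (P Q : Measure ℝ) : EReal :=
  mutualInfo (P.prod Q) (fun p => p.1) (fun p => p.1 + p.2)

section

variable {α : Type*} [MeasurableSpace α]

lemma MeasureTheory.MeasurePreserving.map_withDensity {β : Type*} [MeasurableSpace β]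
    {μ : Measure α} {ν : Measure β} {e : α ≃ᵐ β} (he : MeasurePreserving e μ ν)
    (f : α → ℝ≥0∞) :
    (μ.withDensity f).map e = ν.withDensity (f ∘ e.symm) := by
  ext s hs
  rw [e.map_apply, withDensity_apply _ (e.measurable hs), withDensity_apply _ hs,
    ← he.setLIntegral_comp_preimage_emb e.measurableEmbedding]
  simp

lemma withDensity_absolutelyContinuous_withDensity {ξ : Measure α} {k h : α → ℝ≥0∞}
    (hh : Measurable h) (hh0 : ∀ᵐ x ∂(ξ.withDensity k), h x ≠ 0) :
    ξ.withDensity k ≪ ξ.withDensity h := by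
  refine Measure.AbsolutelyContinuous.mk fun s hs hs0 => ?_
  rw [withDensity_apply _ hs, setLIntegral_eq_zero_iff hs hh] at hs0
  rw [measure_eq_zero_iff_ae_notMem]
  filter_upwards [hh0, withDensity_absolutelyContinuous ξ k hs0] with x hx hxs
  exact mt hxs hx

lemma rnDeriv_withDensity_withDensity {ξ : Measure α} [SigmaFinite ξ] {k h : α → ℝ≥0∞}
    (hk : Measurable k) (hh : Measurable h)
    [SigmaFinite (ξ.withDensity k)] [SigmaFinite (ξ.withDensity h)] :
    (ξ.withDensity k).rnDeriv (ξ.withDensity h) =ᵐ[ξ.withDensity h] fun x => k x / h x := by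
  have hξ := withDensity_absolutelyContinuous ξ h
  filter_upwards [Measure.rnDeriv_eq_div (withDensity_absolutelyContinuous ξ k) hξ,
    hξ.ae_le (Measure.rnDeriv_withDensity ξ hk), hξ.ae_le (Measure.rnDeriv_withDensity ξ hh)]
    with x hx hkx hhx
  rw [hx, hkx, hhx]

lemma ae_toReal_rnDeriv_ne_zero {P ν : Measure α} [SigmaFinite P] [SigmaFinite ν]
    (hP : P ≪ ν) :
    ∀ᵐ x ∂P, (P.rnDeriv ν x).toReal ≠ 0 := by
  filter_upwards [Measure.rnDeriv_pos hP, hP.ae_le (Measure.rnDeriv_ne_top P ν)] with x h0 htop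
  exact ENNReal.toReal_ne_zero.mpr ⟨h0.ne', htop⟩

lemma klDiv_eq_integral_log_sub_integral_log {J R : Measure α} (hac : J ≪ R)
    {a b : α → ℝ≥0∞} (hrn : J.rnDeriv R =ᵐ[J] fun x => a x / b x)
    (ha : ∀ᵐ x ∂J, (a x).toReal ≠ 0) (hb : ∀ᵐ x ∂J, (b x).toReal ≠ 0)
    (hai : Integrable (fun x => log (a x).toReal) J)
    (hbi : Integrable (fun x => log (b x).toReal) J) :
    klDiv J R = ((∫ x, log (a x).toReal ∂J - ∫ x, log (b x).toReal ∂J : ℝ) : EReal) := by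
  have hlog : (fun x => log (J.rnDeriv R x).toReal) =ᵐ[J]
      fun x => log (a x).toReal - log (b x).toReal := by
    filter_upwards [hrn, ha, hb] with x hx hax hbx
    rw [hx, ENNReal.toReal_div, Real.log_div hax hbx]
  rw [klDiv, if_pos ⟨hac, (hai.sub hbi).congr hlog.symm⟩, integral_congr_ae hlog,
    integral_sub hai hbi]

lemma klDiv_eq_integral_log_sub_integral_log_of_withDensity {J R ξ : Measure α}
    [SigmaFinite J] [SigmaFinite R] [SigmaFinite ξ] {k h : α → ℝ≥0∞}
    (hk : Measurable k) (hh : Measurable h)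
    (hJ : J = ξ.withDensity k) (hR : R = ξ.withDensity h)
    (hk0 : ∀ᵐ x ∂J, (k x).toReal ≠ 0) (hh0 : ∀ᵐ x ∂J, (h x).toReal ≠ 0)
    (hki : Integrable (fun x => log (k x).toReal) J)
    (hhi : Integrable (fun x => log (h x).toReal) J) :
    klDiv J R = ((∫ x, log (k x).toReal ∂J - ∫ x, log (h x).toReal ∂J : ℝ) : EReal) := by
  subst hJ hR
  have hac := withDensity_absolutelyContinuous_withDensity hh
    (hh0.mono fun _ hx => (ENNReal.toReal_ne_zero.mp hx).1)
  exact klDiv_eq_integral_log_sub_integral_log hac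
    (hac.ae_le (rnDeriv_withDensity_withDensity hk hh)) hk0 hh0 hki hhi

end

lemma HasFiniteDiffEntropy.integrable_log_rnDeriv {P : Measure ℝ} [SigmaFinite P]
    (hP : HasFiniteDiffEntropy P) : Integrable (fun x => log (P.rnDeriv volume x).toReal) P := by
  rw [← integrable_rnDeriv_smul_iff hP.1]
  exact hP.2

lemma integral_log_rnDeriv {P : Measure ℝ} [SigmaFinite P] (hP : P ≪ volume) :
    ∫ x, log (P.rnDeriv volume x).toReal ∂P = -diffEntropy P := by
  rw [← integral_rnDeriv_smul hP, diffEntropy, neg_neg]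
  rfl

lemma MeasureTheory.MeasurePreserving.integral_log_rnDeriv_comp {α : Type*} [MeasurableSpace α]
    {J : Measure α} {P : Measure ℝ} [SigmaFinite P] {φ : α → ℝ}
    (hφ : MeasurePreserving φ J P) (hP : P ≪ volume) :
    ∫ x, log (P.rnDeriv volume (φ x)).toReal ∂J = -diffEntropy P := by
  rw [← integral_map (f := fun y => log (P.rnDeriv volume y).toReal) hφ.measurable.aemeasurable
      (Measure.measurable_rnDeriv P volume).ennreal_toReal.log.aestronglyMeasurable,
    hφ.map_eq, integral_log_rnDeriv hP]

lemma map_shearAddRight_prod_withDensity {G : Type*} [AddCommGroup G] [MeasurableSpace G]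
    [MeasurableAdd₂ G] [MeasurableNeg G] (μ ν : Measure G) [SFinite μ] [SFinite ν]
    [ν.IsAddLeftInvariant] {g : G → ℝ≥0∞} (hg : Measurable g) :
    (μ.prod (ν.withDensity g)).map (MeasurableEquiv.shearAddRight G)
      = (μ.prod ν).withDensity fun z => g (z.2 - z.1) := by
  rw [prod_withDensity_right hg,
    MeasurePreserving.map_withDensity (e := MeasurableEquiv.shearAddRight G)
      (measurePreserving_prod_add μ ν)]
  congr 1
  funext z
  rw [sub_eq_neg_add]
  rfl

lemma ProbabilityTheory.IndepFun.map_prod_add_eq_withDensity {Ω G : Type*} [MeasurableSpace Ω]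
    {μ : Measure Ω} [IsFiniteMeasure μ] [AddCommGroup G] [MeasurableSpace G] [MeasurableAdd₂ G]
    [MeasurableNeg G] {ν : Measure G} [SigmaFinite ν] [ν.IsAddLeftInvariant] {X N : Ω → G}
    (hX : Measurable X) (hN : Measurable N) (hindep : IndepFun X N μ) (hN_ac : μ.map N ≪ ν) :
    μ.map (fun ω => (X ω, X ω + N ω))
      = ((μ.map X).prod ν).withDensity fun z => (μ.map N).rnDeriv ν (z.2 - z.1) := by
  rw [← map_shearAddRight_prod_withDensity _ _ (Measure.measurable_rnDeriv _ _),
    Measure.withDensity_rnDeriv_eq _ _ hN_ac,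
    ← (indepFun_iff_map_prod_eq_prod_map_map hX.aemeasurable hN.aemeasurable).mp hindep,
    Measure.map_map (MeasurableEquiv.measurable _) (hX.prodMk hN)]
  rfl

theorem stmt_1_general {Ω : Type*} [MeasurableSpace Ω] (μ : Measure Ω) [IsProbabilityMeasure μ]
    (X N : Ω → ℝ) (hX : Measurable X) (hN : Measurable N)
    (hindep : IndepFun X N μ)
    (hNent : HasFiniteDiffEntropy (μ.map N))
    (hSent : HasFiniteDiffEntropy (μ.map (fun ω => X ω + N ω))) :
    mutualInfo μ X (fun ω => X ω + N ω)
      = ((diffEntropy (μ.map (fun ω => X ω + N ω)) - diffEntropy (μ.map N) : ℝ) : EReal) := by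
  set P := μ.map X
  set Q := μ.map N
  set S := μ.map fun ω => X ω + N ω
  set J := μ.map fun ω => (X ω, X ω + N ω)
  have hXS : Measurable fun ω => (X ω, X ω + N ω) := hX.prodMk (hX.add hN)
  have hS : MeasurePreserving Prod.snd J S :=
    ⟨measurable_snd, Measure.map_map measurable_snd hXS⟩
  have hQ : MeasurePreserving (fun p : ℝ × ℝ => p.2 - p.1) J Q :=
    ⟨by fun_prop, (Measure.map_map (by fun_prop) hXS).trans
      (congrArg (Measure.map · μ) (funext fun ω => add_sub_cancel_left (X ω) (N ω)))⟩
  have hJ : J = (P.prod volume).withDensity fun p => Q.rnDeriv volume (p.2 - p.1) :=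
    hindep.map_prod_add_eq_withDensity hX hN hNent.1
  have hPS : P.prod S = (P.prod volume).withDensity fun p => S.rnDeriv volume p.2 := by
    rw [← prod_withDensity_right (Measure.measurable_rnDeriv S volume),
      Measure.withDensity_rnDeriv_eq S volume hSent.1]
  rw [mutualInfo, klDiv_eq_integral_log_sub_integral_log_of_withDensity (by fun_prop)
      (by fun_prop) hJ hPS
      (hQ.quasiMeasurePreserving.ae (ae_toReal_rnDeriv_ne_zero hNent.1))
      (hS.quasiMeasurePreserving.ae (ae_toReal_rnDeriv_ne_zero hSent.1))
      (hQ.integrable_comp_of_integrable hNent.integrable_log_rnDeriv)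
      (hS.integrable_comp_of_integrable hSent.integrable_log_rnDeriv),
    hQ.integral_log_rnDeriv_comp hNent.1, hS.integral_log_rnDeriv_comp hSent.1]
  congr 1
  ring

/-- For independent `X`, `N` with densities and finite differential entropies,
with `X + N` of finite differential entropy, `I(X ; X + N) = h(X + N) - h(N)`. -/
theorem stmt_1 {Ω : Type*} [MeasurableSpace Ω] (μ : Measure Ω) [IsProbabilityMeasure μ]
    (X N : Ω → ℝ) (hX : Measurable X) (hN : Measurable N)
    (hindep : IndepFun X N μ)
    (hXent : HasFiniteDiffEntropy (μ.map X))
    (hNent : HasFiniteDiffEntropy (μ.map N))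
    (hSent : HasFiniteDiffEntropy (μ.map (fun ω => X ω + N ω))) :
    mutualInfo μ X (fun ω => X ω + N ω)
      = ((diffEntropy (μ.map (fun ω => X ω + N ω)) - diffEntropy (μ.map N) : ℝ) : EReal) :=
  stmt_1_general μ X N hX hN hindep hNent hSent
end
end

section
/- Let N and N' be real random variables with laws P_N and P_{N'}, and let Z be a real random variable independent of each of N and N'. Then the Kullback–Leibler divergence cannot increase under the addition of the independent noise Z: D(P_{N+Z} ‖ P_{N'+Z}) ≤ D(P_N ‖ P_{N'}). -/
open MeasureTheory ProbabilityTheory Real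
open scoped NNReal ENNReal Classical

noncomputable section

/-! For probability measures, `klDiv` is Mathlib's `InformationTheory.klDiv`. By independence the
law of `N + Z` is the image of `P_N ⊗ P_Z` under addition. Tensoring both arguments with the same
law `P_Z` leaves the divergence unchanged (chain rule with a constant kernel), and pushing both
forward along addition can only decrease it (data-processing inequality). -/

lemma klDiv_eq_coe_klDiv {α : Type*} [MeasurableSpace α] (P Q : Measure α)
    [IsProbabilityMeasure P] [IsProbabilityMeasure Q] :
    klDiv P Q = (InformationTheory.klDiv P Q : EReal) := by
  rw [klDiv]
  split_ifs with h
  · obtain ⟨hPQ, hint⟩ := h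
    have hnonneg := InformationTheory.integral_llr_add_sub_measure_univ_nonneg hPQ hint
    simp only [probReal_univ, add_sub_cancel_right] at hnonneg
    rw [InformationTheory.klDiv_of_ac_of_integrable hPQ hint]
    simp only [probReal_univ, add_sub_cancel_right, EReal.coe_ennreal_ofReal,
      max_eq_left hnonneg]
    rfl
  · rw [InformationTheory.klDiv_eq_top_iff.mpr (not_and.mp h), EReal.coe_ennreal_top]

lemma InformationTheory.klDiv_prod_left {α β : Type*} [MeasurableSpace α] [MeasurableSpace β]
    (P Q : Measure α) (R : Measure β) [IsFiniteMeasure P] [IsFiniteMeasure Q]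
    [IsProbabilityMeasure R] :
    InformationTheory.klDiv (P.prod R) (Q.prod R) = InformationTheory.klDiv P Q := by
  rw [← Measure.compProd_const, ← Measure.compProd_const,
    InformationTheory.klDiv_compProd_left]

lemma InformationTheory.klDiv_conv_le {M : Type*} [AddMonoid M] [MeasurableSpace M]
    [MeasurableAdd₂ M] (P Q R : Measure M) [IsFiniteMeasure P] [IsFiniteMeasure Q]
    [IsProbabilityMeasure R] :
    InformationTheory.klDiv (P ∗ R) (Q ∗ R) ≤ InformationTheory.klDiv P Q :=
  calc InformationTheory.klDiv (P ∗ R) (Q ∗ R)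
      ≤ InformationTheory.klDiv (P.prod R) (Q.prod R) :=
        InformationTheory.klDiv_map_le _ _ measurable_add
    _ = InformationTheory.klDiv P Q := InformationTheory.klDiv_prod_left P Q R

/-- Data-processing inequality for the addition of independent noise:
`D(P_{N+Z} ‖ P_{N'+Z}) ≤ D(P_N ‖ P_{N'})`. -/
theorem stmt_3 {Ω : Type*} [MeasurableSpace Ω] (μ : Measure Ω) [IsProbabilityMeasure μ]
    (N N' Z : Ω → ℝ) (hN : Measurable N) (hN' : Measurable N') (hZ : Measurable Z)
    (hNZ : IndepFun N Z μ) (hN'Z : IndepFun N' Z μ) :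
    klDiv (μ.map (fun ω => N ω + Z ω)) (μ.map (fun ω => N' ω + Z ω))
      ≤ klDiv (μ.map N) (μ.map N') := by
  have := Measure.isProbabilityMeasure_map (μ := μ) hN.aemeasurable
  have := Measure.isProbabilityMeasure_map (μ := μ) hN'.aemeasurable
  have := Measure.isProbabilityMeasure_map (μ := μ) hZ.aemeasurable
  have hlawNZ : μ.map (fun ω => N ω + Z ω) = μ.map N ∗ μ.map Z :=
    hNZ.map_add_eq_map_conv_map hN hZ
  have hlawN'Z : μ.map (fun ω => N' ω + Z ω) = μ.map N' ∗ μ.map Z :=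
    hN'Z.map_add_eq_map_conv_map hN' hZ
  rw [hlawNZ, hlawN'Z, klDiv_eq_coe_klDiv, klDiv_eq_coe_klDiv,
    EReal.coe_ennreal_le_coe_ennreal_iff]
  exact InformationTheory.klDiv_conv_le _ _ _
end
end

section
/- Fix E > 0 and σ² > 0. Let N be a zero-mean real random variable with probability density, variance σ², and finite differential entropy, and let X_G ∼ N(0, E) be independent of N. Then the communication rate achieved by a Gaussian input over the non-Gaussian additive-noise channel is at least the Gaussian-equivalent capacity: I(X_G ; X_G + N) ≥ ½·log(1 + E/σ²). -/
open MeasureTheory ProbabilityTheory Real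
open scoped NNReal ENNReal Classical

noncomputable section

/-!
Donsker–Varadhan: for every `f`, `D(P ‖ Q) ≥ E_P[f] - log E_Q[exp f]`. Take `P = P_(X, X + N)`,
`Q = P_X ⊗ P_(X + N)` and for `f` the information density of the Gaussian channel,
`f(x, y) = log (φ_σ²(y - x) / φ_(E+σ²)(y))`. As `X ∼ N(0, E)`, completing the square gives
`E[φ_σ²(y - X)] = φ_(E+σ²)(y)` for every `y`, so `E_Q[exp f] = 1` whatever the law of `N`.
Log-densities of Gaussians are quadratic, so `E_P[f]` only sees the means and variances of `N` and
`X + N`, which are those of the Gaussian channel: `E_P[f] = ½ log (2π(E + σ²)) - ½ log (2πσ²)`.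
-/

section DonskerVaradhan

variable {α : Type*} [MeasurableSpace α] {P Q : Measure α} [IsProbabilityMeasure P]
  [IsProbabilityMeasure Q] {f : α → ℝ}

lemma integral_sub_log_integral_exp_le_integral_llr (hPQ : P ≪ Q) (hfP : Integrable f P)
    (hfQ : Integrable (fun x ↦ exp (f x)) Q) (h_int : Integrable (llr P Q) P) :
    ∫ x, f x ∂P - log (∫ x, exp (f x) ∂Q) ≤ ∫ x, llr P Q x ∂P := by
  have := isProbabilityMeasure_tilted hfQ
  have hPQ' : P ≪ Q.tilted f := hPQ.trans (absolutelyContinuous_tilted hfQ)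
  -- Gibbs' inequality for `P` against the tilted measure `Q.tilted f`
  have h := InformationTheory.integral_llr_add_sub_measure_univ_nonneg hPQ'
    (integrable_llr_tilted_right hPQ hfP h_int hfQ)
  rw [integral_llr_tilted_right hPQ hfP hfQ h_int] at h
  simp only [probReal_univ] at h
  linarith

lemma integral_sub_log_integral_exp_le_klDiv (hfP : Integrable f P)
    (hfQ : Integrable (fun x ↦ exp (f x)) Q) :
    ((∫ x, f x ∂P - log (∫ x, exp (f x) ∂Q) : ℝ) : EReal) ≤ klDiv P Q := by
  rw [klDiv]
  split_ifs with h
  · exact EReal.coe_le_coe (integral_sub_log_integral_exp_le_integral_llr h.1 hfP hfQ h.2)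
  · exact le_top

end DonskerVaradhan

lemma log_gaussianPDFReal (m : ℝ) {v : ℝ≥0} (hv : v ≠ 0) (x : ℝ) :
    log (gaussianPDFReal m v x) = -(log (2 * π * v) + (x - m) ^ 2 / v) / 2 := by
  have hv' : (0 : ℝ) < v := by positivity
  rw [gaussianPDFReal, log_mul (by positivity) (exp_pos _).ne', log_inv, log_exp,
    log_sqrt (by positivity)]
  field_simp
  ring

section LogDensity

variable {Ω : Type*} [MeasurableSpace Ω] {μ : Measure Ω} {Z : Ω → ℝ}

lemma integrable_log_gaussianPDFReal_comp [IsFiniteMeasure μ] (m : ℝ) {v : ℝ≥0} (hv : v ≠ 0)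
    (hZ : MemLp Z 2 μ) : Integrable (fun ω ↦ log (gaussianPDFReal m v (Z ω))) μ := by
  simp_rw [log_gaussianPDFReal m hv]
  have : Integrable (fun ω ↦ (Z ω - m) ^ 2) μ :=
    (hZ.sub (memLp_const m)).integrable_sq
  fun_prop

lemma integral_log_gaussianPDFReal_comp [IsProbabilityMeasure μ] {v : ℝ≥0} (hv : v ≠ 0)
    (hZ : MemLp Z 2 μ) :
    ∫ ω, log (gaussianPDFReal μ[Z] v (Z ω)) ∂μ = -(log (2 * π * v) + Var[Z; μ] / v) / 2 := by
  have hsq : Integrable (fun ω ↦ (Z ω - μ[Z]) ^ 2 / v) μ :=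
    ((hZ.sub (memLp_const _)).integrable_sq).div_const _
  simp_rw [log_gaussianPDFReal _ hv]
  rw [variance_eq_integral hZ.aemeasurable, integral_div, integral_neg,
    integral_add (integrable_const _) hsq, integral_div]
  simp

end LogDensity

section GaussianConvolution

variable {v w : ℝ≥0}

lemma gaussianPDFReal_mul_gaussianPDFReal_sub (hv : v ≠ 0) (hw : w ≠ 0) (x y : ℝ) :
    gaussianPDFReal 0 w x * gaussianPDFReal 0 v (y - x)
      = gaussianPDFReal 0 (w + v) y * gaussianPDFReal (w * y / (w + v)) (w * v / (w + v)) x := by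
  have hv' : (0 : ℝ) < v := by positivity
  have hw' : (0 : ℝ) < w := by positivity
  simp only [gaussianPDFReal, NNReal.coe_add, NNReal.coe_mul, NNReal.coe_div]
  rw [mul_mul_mul_comm, mul_mul_mul_comm (√(2 * π * (w + v)))⁻¹, ← mul_inv, ← mul_inv,
    ← sqrt_mul (by positivity), ← sqrt_mul (by positivity), ← exp_add, ← exp_add]
  congr 2
  · field_simp
  · field_simp
    ring

lemma lintegral_gaussianPDFReal_sub_gaussianReal (hv : v ≠ 0) (y : ℝ) :
    ∫⁻ x, ENNReal.ofReal (gaussianPDFReal 0 v (y - x)) ∂gaussianReal 0 w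
      = ENNReal.ofReal (gaussianPDFReal 0 (w + v) y) := by
  rcases eq_or_ne w 0 with rfl | hw
  · simp [gaussianReal_zero_var]
  have hwv : w * v / (w + v) ≠ 0 := by positivity
  rw [gaussianReal_of_var_ne_zero _ hw, lintegral_withDensity_eq_lintegral_mul₀
    (measurable_gaussianPDF _ _).aemeasurable (by fun_prop)]
  simp_rw [Pi.mul_apply, gaussianPDF, ← ENNReal.ofReal_mul (gaussianPDFReal_nonneg _ _ _),
    gaussianPDFReal_mul_gaussianPDFReal_sub hv hw,
    ENNReal.ofReal_mul (gaussianPDFReal_nonneg _ _ _)]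
  rw [lintegral_const_mul _ (by fun_prop), lintegral_gaussianPDFReal_eq_one _ hwv, mul_one]

end GaussianConvolution

def gaussianInfoDensity (E σ2 : ℝ≥0) (p : ℝ × ℝ) : ℝ :=
  log (gaussianPDFReal 0 σ2 (p.2 - p.1)) - log (gaussianPDFReal 0 (E + σ2) p.2)

section GaussianInfoDensity

variable {E σ2 : ℝ≥0}

@[fun_prop]
lemma measurable_gaussianInfoDensity : Measurable (gaussianInfoDensity E σ2) := by
  unfold gaussianInfoDensity
  fun_prop

lemma exp_gaussianInfoDensity (hσ : σ2 ≠ 0) (p : ℝ × ℝ) :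
    exp (gaussianInfoDensity E σ2 p)
      = gaussianPDFReal 0 σ2 (p.2 - p.1) / gaussianPDFReal 0 (E + σ2) p.2 := by
  rw [gaussianInfoDensity, exp_sub, exp_log (gaussianPDFReal_pos _ _ _ hσ),
    exp_log (gaussianPDFReal_pos _ _ _ (by positivity))]

lemma lintegral_exp_gaussianInfoDensity (hσ : σ2 ≠ 0) (ν : Measure ℝ) [IsProbabilityMeasure ν] :
    ∫⁻ p, ENNReal.ofReal (exp (gaussianInfoDensity E σ2 p)) ∂(gaussianReal 0 E).prod ν = 1 := by
  have inner (y : ℝ) : ∫⁻ x, ENNReal.ofReal (exp (gaussianInfoDensity E σ2 (x, y)))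
      ∂gaussianReal 0 E = 1 := by
    have hpos := gaussianPDFReal_pos 0 (E + σ2) y (by positivity)
    simp_rw [exp_gaussianInfoDensity hσ, div_eq_mul_inv,
      ENNReal.ofReal_mul (gaussianPDFReal_nonneg _ _ _)]
    rw [lintegral_mul_const _ (by fun_prop), lintegral_gaussianPDFReal_sub_gaussianReal hσ,
      ← ENNReal.ofReal_mul hpos.le, mul_inv_cancel₀ hpos.ne', ENNReal.ofReal_one]
  rw [lintegral_prod_symm _ (by fun_prop)]
  simp [inner]

lemma integrable_exp_gaussianInfoDensity (hσ : σ2 ≠ 0) (ν : Measure ℝ) [IsProbabilityMeasure ν] :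
    Integrable (fun p ↦ exp (gaussianInfoDensity E σ2 p)) ((gaussianReal 0 E).prod ν) := by
  rw [← lintegral_ofReal_ne_top_iff_integrable (by fun_prop) (ae_of_all _ fun _ ↦ (exp_pos _).le),
    lintegral_exp_gaussianInfoDensity hσ]
  exact ENNReal.one_ne_top

lemma integral_exp_gaussianInfoDensity (hσ : σ2 ≠ 0) (ν : Measure ℝ) [IsProbabilityMeasure ν] :
    ∫ p, exp (gaussianInfoDensity E σ2 p) ∂(gaussianReal 0 E).prod ν = 1 := by
  rw [integral_eq_lintegral_of_nonneg_ae (ae_of_all _ fun _ ↦ (exp_pos _).le) (by fun_prop),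
    lintegral_exp_gaussianInfoDensity hσ, ENNReal.toReal_one]

end GaussianInfoDensity

lemma ProbabilityTheory.HasLaw.memLp_gaussianReal {Ω : Type*} [MeasurableSpace Ω] {μ : Measure Ω}
    {X : Ω → ℝ} {m : ℝ} {v : ℝ≥0} (hX : HasLaw X (gaussianReal m v) μ)
    {p : ℝ≥0∞} (hp : p ≠ ∞) : MemLp X p μ :=
  (hX.map_eq ▸ memLp_id_gaussianReal' p hp : MemLp id p (μ.map X)).comp_of_map hX.aemeasurable

section AdditiveNoiseChannel

variable {Ω : Type*} [MeasurableSpace Ω] {μ : Measure Ω} [IsProbabilityMeasure μ]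
  {E σ2 : ℝ≥0} {X N : Ω → ℝ}

lemma gaussianInfoDensity_add (E σ2 : ℝ≥0) (x n : ℝ) :
    gaussianInfoDensity E σ2 (x, x + n)
      = log (gaussianPDFReal 0 σ2 n) - log (gaussianPDFReal 0 (E + σ2) (x + n)) := by
  rw [gaussianInfoDensity, add_sub_cancel_left]

lemma integrable_gaussianInfoDensity_comp (hσ : σ2 ≠ 0) (hX : MemLp X 2 μ) (hN : MemLp N 2 μ) :
    Integrable (fun ω ↦ gaussianInfoDensity E σ2 (X ω, X ω + N ω)) μ := by
  simp_rw [gaussianInfoDensity_add]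
  exact (integrable_log_gaussianPDFReal_comp 0 hσ hN).sub
    (integrable_log_gaussianPDFReal_comp 0 (by positivity) (hX.add hN))

lemma integral_gaussianInfoDensity_comp (hσ : σ2 ≠ 0) (hX : HasLaw X (gaussianReal 0 E) μ)
    (hN : MemLp N 2 μ) (hNmean : μ[N] = 0) (hNvar : Var[N; μ] = σ2) (hXN : IndepFun X N μ) :
    ∫ ω, gaussianInfoDensity E σ2 (X ω, X ω + N ω) ∂μ = log (1 + E / σ2) / 2 := by
  have hXL2 : MemLp X 2 μ := hX.memLp_gaussianReal (by norm_num)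
  have hY : MemLp (fun ω ↦ X ω + N ω) 2 μ := hXL2.add hN
  have hXmean : μ[X] = 0 := by rw [hX.integral_eq, integral_id_gaussianReal]
  have hXvar : Var[X; μ] = E := by rw [hX.variance_eq, variance_id_gaussianReal]
  have hYmean : μ[fun ω ↦ X ω + N ω] = 0 := by
    rw [integral_add (hXL2.integrable one_le_two) (hN.integrable one_le_two), hXmean, hNmean,
      add_zero]
  have hYvar : Var[fun ω ↦ X ω + N ω; μ] = E + σ2 := by
    rw [← Pi.add_def, hXN.variance_add hXL2 hN, hXvar, hNvar]
  have hEσ : E + σ2 ≠ 0 := by positivity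
  have hlogN := integral_log_gaussianPDFReal_comp hσ hN
  have hlogY := integral_log_gaussianPDFReal_comp hEσ hY
  rw [hNmean, hNvar] at hlogN
  rw [hYmean, hYvar] at hlogY
  simp_rw [gaussianInfoDensity_add]
  rw [integral_sub (integrable_log_gaussianPDFReal_comp 0 hσ hN)
    (integrable_log_gaussianPDFReal_comp 0 hEσ hY), hlogN, hlogY]
  have hσ' : (0 : ℝ) < σ2 := by positivity
  have hratio : 1 + (E : ℝ) / σ2 = 2 * π * (E + σ2) / (2 * π * σ2) := by
    field_simp
    ring
  rw [hratio, log_div (by positivity) (by positivity), NNReal.coe_add, div_self hσ'.ne',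
    div_self (by positivity)]
  ring

end AdditiveNoiseChannel

theorem stmt_5_general {Ω : Type*} [MeasurableSpace Ω] (μ : Measure Ω) [IsProbabilityMeasure μ]
    (E σ2 : ℝ≥0) (hσ2 : 0 < σ2)
    (X N : Ω → ℝ) (hX : Measurable X)
    (hXlaw : μ.map X = gaussianReal 0 E)
    (hNmean : ∫ ω, N ω ∂μ = 0)
    (hNL2 : MemLp N 2 μ) (hNvar : variance N μ = (σ2 : ℝ))
    (hXN : IndepFun X N μ) :
    ((Real.log (1 + (E : ℝ) / (σ2 : ℝ)) / 2 : ℝ) : EReal)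
      ≤ mutualInfo μ X (fun ω => X ω + N ω) := by
  have hXgauss : HasLaw X (gaussianReal 0 E) μ := ⟨hX.aemeasurable, hXlaw⟩
  have hY : AEMeasurable (fun ω ↦ X ω + N ω) μ := hX.aemeasurable.add hNL2.aemeasurable
  have hW : AEMeasurable (fun ω ↦ (X ω, X ω + N ω)) μ := hX.aemeasurable.prodMk hY
  have := Measure.isProbabilityMeasure_map hW
  have := Measure.isProbabilityMeasure_map hY
  have hf : Integrable (gaussianInfoDensity E σ2) (μ.map fun ω ↦ (X ω, X ω + N ω)) :=
    (integrable_map_measure (by fun_prop) hW).mpr <| integrable_gaussianInfoDensity_comp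
      hσ2.ne' (hXgauss.memLp_gaussianReal (by norm_num)) hNL2
  have h := integral_sub_log_integral_exp_le_klDiv hf
    (integrable_exp_gaussianInfoDensity hσ2.ne' (μ.map fun ω ↦ X ω + N ω))
  rw [integral_map hW (by fun_prop), integral_exp_gaussianInfoDensity hσ2.ne', log_one, sub_zero,
    integral_gaussianInfoDensity_comp hσ2.ne' hXgauss hNL2 hNmean hNvar hXN, ← hXlaw] at h
  exact h

/-- A Gaussian input over the non-Gaussian additive-noise channel achieves at
least the Gaussian-equivalent capacity: `I(X_G ; X_G + N) ≥ ½ log (1 + E/σ²)`. -/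
theorem stmt_5 {Ω : Type*} [MeasurableSpace Ω] (μ : Measure Ω) [IsProbabilityMeasure μ]
    (E σ2 : ℝ≥0) (hE : 0 < E) (hσ2 : 0 < σ2)
    (X N : Ω → ℝ) (hX : Measurable X) (hN : Measurable N)
    (hXlaw : μ.map X = gaussianReal 0 E)
    (hNac : μ.map N ≪ volume)
    (hNint : Integrable N μ) (hNmean : ∫ ω, N ω ∂μ = 0)
    (hNL2 : MemLp N 2 μ) (hNvar : variance N μ = (σ2 : ℝ))
    (hNent : HasFiniteDiffEntropy (μ.map N))
    (hXN : IndepFun X N μ) :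
    ((Real.log (1 + (E : ℝ) / (σ2 : ℝ)) / 2 : ℝ) : EReal)
      ≤ mutualInfo μ X (fun ω => X ω + N ω) :=
  stmt_5_general μ E σ2 hσ2 X N hX hXlaw hNmean hNL2 hNvar hXN
end
end
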